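/- arXiv:2103.11198 — 3 statements merged into one kernel-verified Lean document; each statement's English description precedes it below -/
import Mathlib

section
/- For all d ≥ 1, the number of balanced independent sets in Q_d is at least 2^{(1 - C/√d)·2^{d-1}} for some absolute constant C > 0. -/
/-- The `d`-dimensional Hamming cube: vertices are `{0,1}^d`,
adjacency = Hamming distance exactly 1. -/
def cube (d : ℕ) : SimpleGraph (Fin d → Bool) where
  Adj x y := hammingDist x y = 1
  symm := ⟨fun x y h => by show hammingDist y x = 1; rwa [hammingDist_comm]⟩
  loopless := ⟨fun x h => by simp [show hammingDist x x = 1 from h] at h⟩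

/-- A vertex is even if it has an even number of `1`-coordinates. -/
def isEvenVtx {d : ℕ} (v : Fin d → Bool) : Prop :=
  Even (Finset.univ.filter (fun i => v i = true)).card

/-- Neighborhood of a set of vertices. -/
def nbhd {d : ℕ} (A : Set (Fin d → Bool)) : Set (Fin d → Bool) :=
  {v | ∃ a ∈ A, (cube d).Adj a v}

/-- `s` is an independent set in `G`. -/
def IsIndepSet {V : Type*} (G : SimpleGraph V) (s : Set V) : Prop :=
  s.Pairwise (fun u v => ¬ G.Adj u v)

/-- Balanced independent sets of the Hamming cube. -/
def balancedIndep (d : ℕ) : Set (Set (Fin d → Bool)) :=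
  {I | IsIndepSet (cube d) I ∧
    (I ∩ {v | isEvenVtx v}).ncard = (I ∩ {v | ¬ isEvenVtx v}).ncard}

/-- The number of balanced independent sets in `Q_d`. -/
noncomputable def bis (d : ℕ) : ℕ := (balancedIndep d).ncard

/-- `A` is `k`-linked: any two vertices of `A` are joined by a chain within `A`
whose consecutive elements are at Hamming distance at most `k`. -/
def kLinked (d k : ℕ) (A : Set (Fin d → Bool)) : Prop :=
  ∀ u ∈ A, ∀ w ∈ A,
    Relation.ReflTransGen (fun a b => b ∈ A ∧ hammingDist a b ≤ k) u w

/-- `B` is a 2-component of `A`: a maximal 2-linked subset. -/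
def isTwoComponent (d : ℕ) (A B : Set (Fin d → Bool)) : Prop :=
  B ⊆ A ∧ B.Nonempty ∧ kLinked d 2 B ∧
    ∀ B', B ⊆ B' → B' ⊆ A → kLinked d 2 B' → B' = B

/-- The closure `[A] = {v : N(v) ⊆ N(A)}`. -/
def closure' {d : ℕ} (A : Set (Fin d → Bool)) : Set (Fin d → Bool) :=
  {v | (cube d).neighborSet v ⊆ nbhd A}

/-- Binary entropy function (base-2 logs; `H 0 = H 1 = 0` by `logb` conventions). -/
noncomputable def binH (a : ℝ) : ℝ :=
  -(a * Real.logb 2 a) - (1 - a) * Real.logb 2 (1 - a)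

namespace BISProof

open Finset

variable {d : ℕ}

/-! ### Weights and parity -/

def wt (v : Fin d → Bool) : ℕ := (Finset.univ.filter (fun i => v i = true)).card

lemma isEven_wt (v : Fin d → Bool) : isEvenVtx v ↔ Even (wt v) := Iff.rfl

lemma wt_le (x y : Fin d → Bool) : wt y ≤ wt x + hammingDist x y := by
  have : (Finset.univ.filter (fun i => y i = true))
      ⊆ (Finset.univ.filter (fun i => x i = true)) ∪ (Finset.univ.filter fun i => x i ≠ y i) := by
    intro i hi
    simp only [Finset.mem_filter, Finset.mem_union, Finset.mem_univ, true_and] at *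
    by_cases h : x i = y i
    · left; rw [h]; exact hi
    · right; exact h
  calc wt y ≤ _ := Finset.card_le_card this
    _ ≤ _ := Finset.card_union_le _ _

lemma parity_hamming (x y : Fin d → Bool) :
    (hammingDist x y : ZMod 2) = (wt x : ZMod 2) + (wt y : ZMod 2) := by
  show ((Finset.univ.filter fun i => x i ≠ y i).card : ZMod 2) = _
  rw [wt, wt, Finset.card_filter, Finset.card_filter, Finset.card_filter]
  push_cast
  rw [← Finset.sum_add_distrib]
  apply Finset.sum_congr rfl
  intro i _
  cases hx : x i <;> cases hy : y i <;> simp [hx, hy] <;> decide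

lemma zmod2_even {n : ℕ} (h : Even n) : (n : ZMod 2) = 0 := by
  rw [← ZMod.natCast_mod, Nat.even_iff.mp h]; rfl

lemma zmod2_odd {n : ℕ} (h : ¬ Even n) : (n : ZMod 2) = 1 := by
  rw [← ZMod.natCast_mod, Nat.odd_iff.mp (Nat.not_even_iff_odd.mp h)]; rfl

lemma not_adj_same_parity {x y : Fin d → Bool}
    (h : (Even (wt x) ↔ Even (wt y))) : ¬ (cube d).Adj x y := by
  intro hadj
  have h1 : (hammingDist x y : ZMod 2) = 1 := by rw [show hammingDist x y = 1 from hadj]; norm_num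
  rw [parity_hamming] at h1
  by_cases hx : Even (wt x)
  · rw [zmod2_even hx, zmod2_even (h.mp hx), add_zero] at h1
    exact one_ne_zero h1.symm
  · rw [zmod2_odd hx, zmod2_odd (fun hy => hx (h.mpr hy))] at h1
    revert h1; decide

lemma not_adj_far {x y : Fin d → Bool}
    (hx : 2 * wt x + 2 ≤ d) (hy : d + 2 ≤ 2 * wt y) : ¬ (cube d).Adj x y := by
  intro hadj
  have h1 : wt y ≤ wt x + 1 := by
    have := wt_le x y; rwa [show hammingDist x y = 1 from hadj] at this
  omega

lemma card_layer (d w : ℕ) :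
    (Finset.univ.filter (fun v : Fin d → Bool => wt v = w)).card = d.choose w := by
  have key : (Finset.univ.filter (fun v : Fin d → Bool => wt v = w)).card
      = (Finset.powersetCard w (Finset.univ : Finset (Fin d))).card := by
    apply Finset.card_bij (fun v _ => Finset.univ.filter (fun i => v i = true))
    · intro v hv
      simp only [Finset.mem_filter, Finset.mem_univ, true_and] at hv
      rw [Finset.mem_powersetCard_univ]
      exact hv
    · intro u hu v hv h
      funext i
      have := Finset.ext_iff.mp h i
      simp only [Finset.mem_filter, Finset.mem_univ, true_and] at this
      cases hui : u i <;> cases hvi : v i <;> simp [hui, hvi] at this ⊢ <;> tauto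
    · intro s hs
      refine ⟨fun i => decide (i ∈ s), ?_, ?_⟩
      · rw [Finset.mem_filter]; simp only [Finset.mem_univ, true_and, wt]
        rw [Finset.mem_powersetCard_univ] at hs
        rw [← hs]
        congr 1
        ext i; simp
      · ext i; simp
  rw [key, Finset.card_powersetCard, Finset.card_fin]

/-! ### The construction and its size -/

def ALow (d : ℕ) : Finset (Fin d → Bool) := univ.filter (fun v => Even (wt v) ∧ 2*wt v + 2 ≤ d)
def A2 (d : ℕ) : Finset (Fin d → Bool) := univ.filter (fun v => ¬Even (wt v) ∧ 2*wt v + 2 ≤ d)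
def BHigh (d : ℕ) : Finset (Fin d → Bool) := univ.filter (fun v => ¬Even (wt v) ∧ d+2 ≤ 2*wt v)
def B2 (d : ℕ) : Finset (Fin d → Bool) := univ.filter (fun v => Even (wt v) ∧ d+2 ≤ 2*wt v)
def Mid (d : ℕ) : Finset (Fin d → Bool) := univ.filter (fun v => d ≤ 2*wt v + 1 ∧ 2*wt v ≤ d+1)
def Low (d : ℕ) : Finset (Fin d → Bool) := univ.filter (fun v => 2*wt v + 2 ≤ d)
def High (d : ℕ) : Finset (Fin d → Bool) := univ.filter (fun v => d+2 ≤ 2*wt v)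

lemma wt_le_d (v : Fin d → Bool) : wt v ≤ d := by
  have := Finset.card_filter_le (Finset.univ : Finset (Fin d)) (fun i => v i = true)
  simpa [wt] using this

lemma wt_comp (v : Fin d → Bool) : wt (fun i => !(v i)) = d - wt v := by
  have key := Finset.card_filter_add_card_filter_not
    (s := (Finset.univ : Finset (Fin d))) (p := fun i => v i = true)
  have h2 : wt (fun i => !(v i)) = (Finset.univ.filter (fun i => ¬ (v i = true))).card := by
    unfold wt; congr 1; apply Finset.filter_congr; intro i _; simp
  simp only [Finset.card_univ, Fintype.card_fin] at key
  have hw : wt v = (Finset.univ.filter (fun i => v i = true)).card := rfl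
  omega

lemma comp_invol : Function.Involutive (fun (v : Fin d → Bool) => (fun i => !(v i))) := by
  intro v; funext i; simp

lemma low_card_eq_high : (Low d).card = (High d).card := by
  apply Finset.card_bij (fun v _ => (fun i => !(v i)))
  · intro v hv
    simp only [Low, High, mem_filter, mem_univ, true_and] at *
    rw [wt_comp]
    have := wt_le_d v; omega
  · intro u _ v _ h
    exact comp_invol.injective h
  · intro v hv
    refine ⟨(fun i => !(v i)), ?_, by funext i; simp⟩
    simp only [Low, High, mem_filter, mem_univ, true_and] at *
    rw [wt_comp]
    have := wt_le_d v; omega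

lemma partition_card : (Low d).card + (Mid d).card + (High d).card = 2^d := by
  have h1 : Low d ∪ Mid d ∪ High d = univ := by
    ext v; simp only [Low, Mid, High, mem_union, mem_filter, mem_univ, true_and, iff_true]
    omega
  have d1 : Disjoint (Low d) (Mid d) := by
    rw [Finset.disjoint_left]; intro v hv hv'
    simp only [Low, Mid, mem_filter, mem_univ, true_and] at hv hv'; omega
  have d2 : Disjoint (Low d ∪ Mid d) (High d) := by
    rw [Finset.disjoint_left]; intro v hv hv'
    simp only [Low, Mid, High, mem_union, mem_filter, mem_univ, true_and] at hv hv'; omega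
  rw [← Finset.card_union_of_disjoint d1, ← Finset.card_union_of_disjoint d2, h1,
    Finset.card_univ]
  simp

lemma low_split : (ALow d).card + (A2 d).card = (Low d).card := by
  have h1 : ALow d ∪ A2 d = Low d := by
    ext v; simp only [ALow, A2, Low, mem_union, mem_filter, mem_univ, true_and]
    tauto
  have d1 : Disjoint (ALow d) (A2 d) := by
    rw [Finset.disjoint_left]; intro v hv hv'
    simp only [ALow, A2, mem_filter, mem_univ, true_and] at hv hv'; tauto
  rw [← Finset.card_union_of_disjoint d1, h1]

lemma high_split : (BHigh d).card + (B2 d).card = (High d).card := by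
  have h1 : BHigh d ∪ B2 d = High d := by
    ext v; simp only [BHigh, B2, High, mem_union, mem_filter, mem_univ, true_and]
    tauto
  have d1 : Disjoint (BHigh d) (B2 d) := by
    rw [Finset.disjoint_left]; intro v hv hv'
    simp only [BHigh, B2, mem_filter, mem_univ, true_and] at hv hv'; tauto
  rw [← Finset.card_union_of_disjoint d1, h1]

noncomputable def flip0 (hd : 0 < d) (v : Fin d → Bool) : Fin d → Bool :=
  Function.update v ⟨0, hd⟩ (!(v ⟨0, hd⟩))

lemma hamming_flip0 (hd : 0 < d) (v : Fin d → Bool) : hammingDist v (flip0 hd v) = 1 := by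
  show (univ.filter (fun i => v i ≠ flip0 hd v i)).card = 1
  have : (univ.filter (fun i => v i ≠ flip0 hd v i)) = {⟨0, hd⟩} := by
    ext i
    rw [mem_filter, mem_singleton]; simp only [mem_univ, true_and, flip0]
    by_cases h : i = ⟨0, hd⟩
    · subst h; simp
    · rw [Function.update_of_ne h]; simp [h]
  rw [this, Finset.card_singleton]

lemma flip0_invol (hd : 0 < d) : Function.Involutive (flip0 hd) := by
  intro v
  unfold flip0
  rw [Function.update_self, Function.update_idem, Bool.not_not, Function.update_eq_self]

lemma flip0_parity (hd : 0 < d) (v : Fin d → Bool) : ¬ (Even (wt v) ↔ Even (wt (flip0 hd v))) :=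
  fun h => not_adj_same_parity h (show (cube d).Adj v (flip0 hd v) from hamming_flip0 hd v)

lemma flip0_wt_le (hd : 0 < d) (v : Fin d → Bool) : wt (flip0 hd v) ≤ wt v + 1 := by
  have := wt_le v (flip0 hd v); rwa [hamming_flip0 hd v] at this

lemma flip0_wt_ge (hd : 0 < d) (v : Fin d → Bool) : wt v ≤ wt (flip0 hd v) + 1 := by
  have := wt_le (flip0 hd v) v
  rwa [hammingDist_comm, hamming_flip0 hd v] at this

lemma A2_card_le (hd : 0 < d) : (A2 d).card ≤ (ALow d).card + (Mid d).card := by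
  calc (A2 d).card ≤ (ALow d ∪ Mid d).card := by
        apply Finset.card_le_card_of_injOn (flip0 hd)
        · intro v hv
          simp only [A2, ALow, Mid, Finset.coe_union, Set.mem_union, mem_coe, mem_union, mem_filter, mem_univ, true_and] at *
          have hp := flip0_parity hd v
          have h1 := flip0_wt_le hd v
          have heven : Even (wt (flip0 hd v)) := by tauto
          obtain ⟨ho, hlow⟩ := hv
          by_cases hc : 2 * wt (flip0 hd v) + 2 ≤ d
          · exact Or.inl ⟨heven, hc⟩
          · exact Or.inr (by omega)
        · exact Set.InjOn.mono (Set.subset_univ _) ((flip0_invol hd).injective.injOn)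
    _ ≤ _ := Finset.card_union_le _ _

lemma B2_card_le (hd : 0 < d) : (B2 d).card ≤ (BHigh d).card + (Mid d).card := by
  calc (B2 d).card ≤ (BHigh d ∪ Mid d).card := by
        apply Finset.card_le_card_of_injOn (flip0 hd)
        · intro v hv
          simp only [B2, BHigh, Mid, Finset.coe_union, Set.mem_union, mem_coe, mem_union, mem_filter, mem_univ, true_and] at *
          have hp := flip0_parity hd v
          have h1 := flip0_wt_ge hd v
          have hodd : ¬ Even (wt (flip0 hd v)) := by tauto
          obtain ⟨ho, hhigh⟩ := hv
          by_cases hc : d + 2 ≤ 2 * wt (flip0 hd v)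
          · exact Or.inl ⟨hodd, hc⟩
          · exact Or.inr (by omega)
        · exact Set.InjOn.mono (Set.subset_univ _) ((flip0_invol hd).injective.injOn)
    _ ≤ _ := Finset.card_union_le _ _

lemma mid_card_le : (Mid d).card ≤ 2 * d.choose (d/2) := by
  calc (Mid d).card
      ≤ ((univ.filter (fun v : Fin d → Bool => wt v = (d-1)/2)) ∪
         (univ.filter (fun v : Fin d → Bool => wt v = (d+1)/2))).card := by
        apply Finset.card_le_card
        intro v hv
        simp only [Mid, mem_union, mem_filter, mem_univ, true_and] at *
        omega
    _ ≤ _ + _ := Finset.card_union_le _ _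
    _ ≤ 2 * d.choose (d/2) := by
        rw [card_layer, card_layer]
        have := Nat.choose_le_middle ((d-1)/2) d
        have := Nat.choose_le_middle ((d+1)/2) d
        omega

lemma pow_le_A (hd : 0 < d) : 2^d ≤ 4 * (ALow d).card + 3 * (Mid d).card := by
  have h1 := partition_card (d := d)
  have h2 := low_card_eq_high (d := d)
  have h3 := low_split (d := d)
  have h4 := A2_card_le hd
  omega

lemma pow_le_B (hd : 0 < d) : 2^d ≤ 4 * (BHigh d).card + 3 * (Mid d).card := by
  have h1 := partition_card (d := d)
  have h2 := low_card_eq_high (d := d)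
  have h3 := high_split (d := d)
  have h4 := B2_card_le hd
  omega

/-! ### Counting balanced independent subsets of the construction -/

lemma union_inter_even {S T : Finset (Fin d → Bool)} (hS : S ⊆ ALow d) (hT : T ⊆ BHigh d) :
    (↑S ∪ ↑T : Set (Fin d → Bool)) ∩ {v | isEvenVtx v} = ↑S := by
  ext v
  simp only [Set.mem_inter_iff, Set.mem_union, Finset.mem_coe, Set.mem_setOf_eq, isEven_wt]
  constructor
  · rintro ⟨hv | hv, he⟩
    · exact hv
    · exact absurd he (by have := hT hv; simp only [BHigh, mem_filter] at this; tauto)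
  · intro hv
    have := hS hv; simp only [ALow, mem_filter] at this
    exact ⟨Or.inl hv, this.2.1⟩

lemma union_inter_odd {S T : Finset (Fin d → Bool)} (hS : S ⊆ ALow d) (hT : T ⊆ BHigh d) :
    (↑S ∪ ↑T : Set (Fin d → Bool)) ∩ {v | ¬ isEvenVtx v} = ↑T := by
  ext v
  simp only [Set.mem_inter_iff, Set.mem_union, Finset.mem_coe, Set.mem_setOf_eq, isEven_wt]
  constructor
  · rintro ⟨hv | hv, he⟩
    · exact absurd he (by have := hS hv; simp only [ALow, mem_filter] at this; tauto)
    · exact hv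
  · intro hv
    have := hT hv; simp only [BHigh, mem_filter] at this
    exact ⟨Or.inr hv, this.2.1⟩

lemma union_mem_balanced (t : ℕ) {S T : Finset (Fin d → Bool)}
    (hS : S ∈ (ALow d).powersetCard t) (hT : T ∈ (BHigh d).powersetCard t) :
    (↑S ∪ ↑T : Set (Fin d → Bool)) ∈ balancedIndep d := by
  rw [Finset.mem_powersetCard] at hS hT
  obtain ⟨hS, hScard⟩ := hS
  obtain ⟨hT, hTcard⟩ := hT
  have memA : ∀ v ∈ ALow d, Even (wt v) ∧ 2*wt v + 2 ≤ d := by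
    intro v hv; simpa [ALow] using hv
  have memB : ∀ v ∈ BHigh d, ¬Even (wt v) ∧ d+2 ≤ 2*wt v := by
    intro v hv; simpa [BHigh] using hv
  constructor
  · intro u hu v hv _
    rcases hu with hu | hu <;> rcases hv with hv | hv
    · exact not_adj_same_parity (iff_of_true (memA u (hS hu)).1 (memA v (hS hv)).1)
    · exact not_adj_far (memA u (hS hu)).2 (memB v (hT hv)).2
    · intro h
      exact not_adj_far (memA v (hS hv)).2 (memB u (hT hu)).2 ((cube d).adj_symm h)
    · exact not_adj_same_parity
        (by simp [(memB u (hT hu)).1, (memB v (hT hv)).1])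
  · rw [union_inter_even hS hT, union_inter_odd hS hT,
      Set.ncard_coe_finset, Set.ncard_coe_finset, hScard, hTcard]

lemma count_lower (t : ℕ) : (ALow d).card.choose t * (BHigh d).card.choose t ≤ bis d := by
  classical
  set f : Finset (Fin d → Bool) × Finset (Fin d → Bool) → Set (Fin d → Bool) :=
    fun p => (↑p.1 ∪ ↑p.2 : Set (Fin d → Bool)) with hf
  set X := (ALow d).powersetCard t ×ˢ (BHigh d).powersetCard t with hX
  have hinj : Set.InjOn f ↑X := by
    intro p hp q hq h
    simp only [hX, Finset.mem_coe, Finset.mem_product, Finset.mem_powersetCard] at hp hq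
    have h' : (↑p.1 ∪ ↑p.2 : Set (Fin d → Bool)) = ↑q.1 ∪ ↑q.2 := h
    have h1 : (↑p.1 : Set (Fin d → Bool)) = ↑q.1 := by
      have e1 := congrArg (fun I => I ∩ {v | isEvenVtx v}) h'
      rwa [union_inter_even hp.1.1 hp.2.1, union_inter_even hq.1.1 hq.2.1] at e1
    have h2 : (↑p.2 : Set (Fin d → Bool)) = ↑q.2 := by
      have e1 := congrArg (fun I => I ∩ {v | ¬ isEvenVtx v}) h'
      rwa [union_inter_odd hp.1.1 hp.2.1, union_inter_odd hq.1.1 hq.2.1] at e1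
    exact Prod.ext (Finset.coe_injective h1) (Finset.coe_injective h2)
  have hsub : ↑(X.image f) ⊆ balancedIndep d := by
    intro I hI
    simp only [Finset.coe_image, Set.mem_image, Finset.mem_coe] at hI
    obtain ⟨p, hp, rfl⟩ := hI
    rw [hX, Finset.mem_product] at hp
    exact union_mem_balanced t hp.1 hp.2
  calc (ALow d).card.choose t * (BHigh d).card.choose t
      = X.card := by
        rw [hX, Finset.card_product, Finset.card_powersetCard, Finset.card_powersetCard]
    _ = (X.image f).card := (Finset.card_image_of_injOn hinj).symm
    _ = (↑(X.image f) : Set (Set (Fin d → Bool))).ncard := (Set.ncard_coe_finset _).symm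
    _ ≤ bis d := Set.ncard_le_ncard hsub (Set.toFinite _)

/-! ### Binomial coefficient estimates -/

lemma cb_sqrt_le (n : ℕ) : (Nat.centralBinom n : ℝ) * Real.sqrt (3*n+1) ≤ 4^n := by
  induction n with
  | zero => simp
  | succ n ih =>
    have hrec : ((n:ℝ) + 1) * (Nat.centralBinom (n+1) : ℝ)
        = 2 * (2*n+1) * (Nat.centralBinom n : ℝ) := by
      exact_mod_cast congrArg (Nat.cast : ℕ → ℝ) (Nat.succ_mul_centralBinom_succ n)
    have hsq : (2 * (2*(n:ℝ)+1)) * Real.sqrt (3*((n:ℝ)+1)+1) ≤ 4 * ((n:ℝ)+1) * Real.sqrt (3*n+1) := by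
      have h1 : (2 * (2*(n:ℝ)+1)) * Real.sqrt (3*((n:ℝ)+1)+1)
          = Real.sqrt ((2 * (2*(n:ℝ)+1))^2 * (3*((n:ℝ)+1)+1)) := by
        rw [Real.sqrt_mul (by positivity), Real.sqrt_sq (by positivity)]
      have h2 : 4 * ((n:ℝ)+1) * Real.sqrt (3*n+1)
          = Real.sqrt ((4 * ((n:ℝ)+1))^2 * (3*n+1)) := by
        rw [Real.sqrt_mul (by positivity), Real.sqrt_sq (by positivity)]
      rw [h1, h2]
      apply Real.sqrt_le_sqrt
      nlinarith [Nat.cast_nonneg (α := ℝ) n]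
    have hpos : (0:ℝ) < (n:ℝ) + 1 := by positivity
    have goal' : ((n:ℝ)+1) * ((Nat.centralBinom (n+1) : ℝ) * Real.sqrt (3*((n:ℝ)+1)+1))
        ≤ ((n:ℝ)+1) * 4^(n+1) := by
      calc ((n:ℝ)+1) * ((Nat.centralBinom (n+1) : ℝ) * Real.sqrt (3*((n:ℝ)+1)+1))
          = (Nat.centralBinom n : ℝ) * ((2 * (2*(n:ℝ)+1)) * Real.sqrt (3*((n:ℝ)+1)+1)) := by
            rw [← mul_assoc, hrec]; ring
        _ ≤ (Nat.centralBinom n : ℝ) * (4 * ((n:ℝ)+1) * Real.sqrt (3*n+1)) := by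
            apply mul_le_mul_of_nonneg_left hsq (by positivity)
        _ = ((n:ℝ)+1) * (4 * ((Nat.centralBinom n : ℝ) * Real.sqrt (3*n+1))) := by ring
        _ ≤ ((n:ℝ)+1) * (4 * 4^n) := by
            apply mul_le_mul_of_nonneg_left (by linarith) (by positivity)
        _ = ((n:ℝ)+1) * 4^(n+1) := by ring
    have key := (mul_le_mul_iff_right₀ hpos).mp goal'
    rw [show ((3:ℝ)*((n+1:ℕ):ℝ)+1) = 3*((n:ℝ)+1)+1 by push_cast; ring]
    exact key

lemma odd_choose_cb (n : ℕ) : 2 * (2*n+1).choose n = Nat.centralBinom (n+1) := by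
  have h1 : Nat.centralBinom (n+1) = (2*n+1).choose n + (2*n+1).choose (n+1) := by
    rw [Nat.centralBinom, show 2*(n+1) = (2*n+1)+1 by ring, Nat.choose_succ_succ]
  have h2 := Nat.choose_symm_half n
  omega

lemma sqrt2_le_two : Real.sqrt 2 ≤ 2 := by
  nlinarith [Real.sq_sqrt (show (0:ℝ) ≤ 2 by norm_num), Real.sqrt_nonneg 2]

lemma choose_mid_sqrt_le {d : ℕ} (hd : 1 ≤ d) :
    (d.choose (d/2) : ℝ) * Real.sqrt d ≤ 2 * 2^d := by
  rcases Nat.even_or_odd d with ⟨n, hn⟩ | ⟨n, hn⟩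
  · subst hn
    have h1 : (n+n)/2 = n := by omega
    have h2 : (n+n).choose n = Nat.centralBinom n := by rw [Nat.centralBinom]; ring_nf
    rw [h1, h2]
    have h3 : Real.sqrt ((n+n:ℕ)) ≤ Real.sqrt 2 * Real.sqrt (3*(n:ℝ)+1) := by
      rw [← Real.sqrt_mul (by norm_num)]
      apply Real.sqrt_le_sqrt
      push_cast; nlinarith [Nat.cast_nonneg (α := ℝ) n]
    calc (Nat.centralBinom n : ℝ) * Real.sqrt ((n+n:ℕ))
        ≤ (Nat.centralBinom n : ℝ) * (Real.sqrt 2 * Real.sqrt (3*(n:ℝ)+1)) := by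
          apply mul_le_mul_of_nonneg_left h3 (by positivity)
      _ = Real.sqrt 2 * ((Nat.centralBinom n : ℝ) * Real.sqrt (3*(n:ℝ)+1)) := by ring
      _ ≤ 2 * 4^n := by
          have hcb := cb_sqrt_le n
          nlinarith [Real.sqrt_nonneg ((3:ℝ)*n+1), Nat.cast_nonneg (α := ℝ) (Nat.centralBinom n),
            pow_pos (show (0:ℝ) < 4 by norm_num) n, sqrt2_le_two, Real.sqrt_nonneg (2:ℝ)]
      _ = 2 * 2^(n+n) := by
          have h5 : 2*n = n+n := two_mul n
          rw [show (4:ℝ) = 2^2 by norm_num, ← pow_mul, h5]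
  · subst hn
    have h1 : (2*n+1)/2 = n := by omega
    rw [h1]
    have h2 : ((2*n+1).choose n : ℝ) = (Nat.centralBinom (n+1) : ℝ) / 2 := by
      rw [← odd_choose_cb n]; push_cast; ring
    rw [h2]
    have hcb := cb_sqrt_le (n+1)
    have hc2 : (3*((n+1:ℕ)):ℝ)+1 = 3*(n:ℝ)+4 := by push_cast; ring
    rw [show ((3:ℝ)*(n+1:ℕ)+1 : ℝ) = 3*(n:ℝ)+4 from hc2] at hcb
    have h3 : Real.sqrt ((2*n+1 : ℕ)) ≤ Real.sqrt (3*(n:ℝ)+4) := by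
      apply Real.sqrt_le_sqrt; push_cast; nlinarith [Nat.cast_nonneg (α := ℝ) n]
    calc (Nat.centralBinom (n+1) : ℝ)/2 * Real.sqrt ((2*n+1:ℕ))
        ≤ (Nat.centralBinom (n+1) : ℝ)/2 * Real.sqrt (3*(n:ℝ)+4) := by
          apply mul_le_mul_of_nonneg_left h3 (by positivity)
      _ = ((Nat.centralBinom (n+1) : ℝ) * Real.sqrt (3*(n:ℝ)+4)) / 2 := by ring
      _ ≤ 4^(n+1)/2 := by linarith
      _ ≤ 2 * 2^(2*n+1) := by
          rw [show (4:ℝ) = 2^2 by norm_num, ← pow_mul]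
          rw [show 2*(n+1) = (2*n+1)+1 by ring, pow_succ]
          linarith [pow_pos (show (0:ℝ) < 2 by norm_num) (2*n+1)]

lemma two_pow_le_choose_mid (m : ℕ) : 2^m ≤ (m+1) * m.choose (m/2) := by
  calc 2^m = ∑ i ∈ Finset.range (m+1), m.choose i := (Nat.sum_range_choose m).symm
    _ ≤ (Finset.range (m+1)).card • m.choose (m/2) :=
        Finset.sum_le_card_nsmul _ _ _ (fun i _ => Nat.choose_le_middle i m)
    _ = (m+1) * m.choose (m/2) := by rw [Finset.card_range, smul_eq_mul]

lemma sq_le_pow (d : ℕ) : d^2 ≤ 2^(d+2) := by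
  induction d with
  | zero => simp
  | succ d ih =>
    have h1 : d < 2^d := Nat.lt_two_pow_self
    have h2 : 2^(d+1+2) = 2*(2^(d+2)) := by ring
    have h3 : (d+1)^2 = d^2 + 2*d + 1 := by ring
    have h4 : 2^(d+2) = 4*2^d := by ring
    omega

lemma empty_mem_balanced (d : ℕ) : (∅ : Set (Fin d → Bool)) ∈ balancedIndep d := by
  constructor
  · exact Set.pairwise_empty _
  · simp

lemma one_le_bis (d : ℕ) : 1 ≤ bis d := by
  have : 0 < (balancedIndep d).ncard :=
    (Set.ncard_pos (Set.toFinite _)).mpr ⟨∅, empty_mem_balanced d⟩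
  exact this

end BISProof


set_option maxHeartbeats 2000000 in
/-- Lower bound on the number of balanced independent sets in `Q_d`:
`bis(Q_d) ≥ 2^{(1 - C/√d)·2^{d-1}}` for an absolute constant `C > 0`. -/
theorem bis_lower_bound :
    ∃ C : ℝ, 0 < C ∧ ∀ d : ℕ, 1 ≤ d →
      (2 : ℝ) ^ ((1 - C / Real.sqrt d) * 2 ^ (d - 1)) ≤ (bis d : ℝ) := by
  refine ⟨1000, by norm_num, ?_⟩
  intro d hd
  by_cases hcase : Real.sqrt d ≤ 1000
  · have hdpos : (0:ℝ) < d := by exact_mod_cast hd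
    have hs : 0 < Real.sqrt d := Real.sqrt_pos.mpr hdpos
    have he : (1 - 1000 / Real.sqrt d) ≤ 0 := by
      rw [sub_nonpos, le_div_iff₀ hs]
      linarith
    have hexp : (1 - 1000 / Real.sqrt d) * 2^(d-1) ≤ 0 :=
      mul_nonpos_of_nonpos_of_nonneg he (by positivity)
    calc (2:ℝ) ^ ((1 - 1000 / Real.sqrt d) * 2 ^ (d - 1))
        ≤ 1 := Real.rpow_le_one_of_one_le_of_nonpos one_le_two hexp
      _ ≤ (bis d : ℝ) := by exact_mod_cast BISProof.one_le_bis d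
  · push_neg at hcase
    obtain ⟨e, rfl⟩ : ∃ e, d = e + 1 := ⟨d - 1, by omega⟩
    clear hd
    set D : ℕ := e + 1 with hD
    set s : ℝ := Real.sqrt D with hsdef
    clear_value s
    have hs1000 : 1000 < s := hcase
    have hspos : 0 < s := by linarith
    have hdpos : (0:ℝ) < (D:ℝ) := by positivity
    have hs2 : s^2 = (D:ℝ) := by rw [hsdef]; exact Real.sq_sqrt (le_of_lt hdpos)
    have hsD : s ≤ (D:ℝ) := by nlinarith
    -- cardinalities
    set a := (BISProof.ALow D).card with ha
    set b := (BISProof.BHigh D).card with hb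
    set m := min a b with hm
    set t := m / 2 with ht
    clear_value t
    clear_value m
    clear_value a
    clear_value b
    have hDpos : 0 < D := by omega
    -- real midband bound
    have hmid : ((BISProof.Mid D).card : ℝ) * s ≤ 4 * 2^D := by
      have h1 : ((BISProof.Mid D).card : ℝ) ≤ 2 * (D.choose (D/2) : ℝ) := by
        exact_mod_cast BISProof.mid_card_le (d := D)
      have h2 := BISProof.choose_mid_sqrt_le (d := D) (by omega)
      have h3 : (0:ℝ) ≤ (D.choose (D/2) : ℝ) := by positivity
      nlinarith
    -- bounds on a and b
    have haR : 2^(D:ℕ) ≤ 4 * (a:ℝ) + 3 * ((BISProof.Mid D).card : ℝ) := by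
      rw [ha]; exact_mod_cast BISProof.pow_le_A (d := D) hDpos
    have hbR : 2^(D:ℕ) ≤ 4 * (b:ℝ) + 3 * ((BISProof.Mid D).card : ℝ) := by
      rw [hb]; exact_mod_cast BISProof.pow_le_B (d := D) hDpos
    have hmids : (0:ℝ) ≤ ((BISProof.Mid D).card : ℝ) := by positivity
    have hmR : 2^(D:ℕ) ≤ 4 * (m:ℝ) + 3 * ((BISProof.Mid D).card : ℝ) := by
      rcases le_total a b with h | h
      · rwa [hm, min_eq_left h]
      · rwa [hm, min_eq_right h]
    -- multiplied by s
    have hF1 : 2^(D:ℕ) * s - 12 * 2^D ≤ 4 * (m:ℝ) * s := by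
      have := mul_le_mul_of_nonneg_right hmR (le_of_lt hspos)
      nlinarith
    have hpow : (0:ℝ) < 2^(D:ℕ) := by positivity
    -- key: (2D+2) s ≤ 32 * 2^D
    have hd2 : ((D:ℝ))^2 ≤ 4 * 2^(D:ℕ) := by
      have h := BISProof.sq_le_pow D
      have h2 : ((D:ℝ))^2 ≤ (2:ℝ)^(D+2) := by exact_mod_cast h
      calc ((D:ℝ))^2 ≤ (2:ℝ)^(D+2) := h2
        _ = 4 * 2^(D:ℕ) := by rw [pow_add]; ring
    have hkey : (2*(D:ℝ)+2) * s ≤ 32 * 2^(D:ℕ) := by nlinarith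
    -- 2d+2 ≤ 2m in ℕ
    have h2mR : (2*(D:ℝ)+2) ≤ 2*(m:ℝ) := by
      have hms : (2*(D:ℝ)+2) * s ≤ 2*(m:ℝ) * s := by nlinarith
      have := le_of_mul_le_mul_right hms hspos
      linarith
    have h2mN : 2*D + 2 ≤ 2*m := by exact_mod_cast h2mR
    set N : ℕ := 2*m - (2*D + 2) with hNdef
    clear_value N
    have hN : 2*m = (2*D+2) + N := by omega
    -- nat chain: 2^(2m) ≤ 2^(2D+2) * bis D
    have hma : m ≤ a := by rw [hm]; exact min_le_left a b
    have hmb : m ≤ b := by rw [hm]; exact min_le_right a b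
    have hc1 : m.choose t * m.choose t ≤ bis D := by
      calc m.choose t * m.choose t
          ≤ a.choose t * b.choose t :=
            Nat.mul_le_mul (Nat.choose_le_choose t hma) (Nat.choose_le_choose t hmb)
        _ ≤ bis D := by rw [ha, hb]; exact BISProof.count_lower t
    have hc2 : 2^m ≤ (m+1) * m.choose t := by
      rw [ht]; exact BISProof.two_pow_le_choose_mid m
    have haU : a ≤ 2^D := by
      have h1 := Finset.card_filter_le (Finset.univ : Finset (Fin D → Bool))
        (fun v => Even (BISProof.wt v) ∧ 2*BISProof.wt v + 2 ≤ D)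
      simpa [ha, BISProof.ALow, Finset.card_univ] using h1
    have hm1 : m + 1 ≤ 2^(D+1) := by
      have h1 : 1 ≤ 2^D := Nat.one_le_two_pow
      have h2 : 2^(D+1) = 2^D + 2^D := by ring
      omega
    have hbig : 2^(2*m) ≤ 2^(2*D+2) * bis D := by
      calc 2^(2*m) = 2^m * 2^m := by rw [← pow_add]; ring_nf
        _ ≤ ((m+1) * m.choose t) * ((m+1) * m.choose t) := Nat.mul_le_mul hc2 hc2
        _ = (m+1)^2 * (m.choose t * m.choose t) := by ring
        _ ≤ (2^(D+1))^2 * bis D := Nat.mul_le_mul (Nat.pow_le_pow_left hm1 2) hc1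
        _ = 2^(2*D+2) * bis D := by rw [← pow_mul]; ring_nf
    have hfin : 2^N ≤ bis D := by
      rw [hN, pow_add] at hbig
      exact Nat.le_of_mul_le_mul_left hbig (by positivity)
    -- exponent comparison
    have hNR : (N:ℝ) = 2*(m:ℝ) - (2*(D:ℝ)+2) := by
      have h' : 2*(m:ℝ) = (2*(D:ℝ)+2) + (N:ℝ) := by exact_mod_cast hN
      linarith
    have hpowe : (0:ℝ) < 2^(e:ℕ) := by positivity
    have hDe : (2:ℝ)^(D:ℕ) = 2 * 2^(e:ℕ) := by rw [hD, pow_succ]; ring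
    have hexp : (1 - 1000/s) * 2^(e:ℕ) ≤ (N:ℝ) := by
      have hcomp : (s - 1000) * 2^(e:ℕ) ≤ (N:ℝ) * s := by
        have expand : (N:ℝ)*s = 2*((m:ℝ)*s) - (2*(D:ℝ)+2)*s := by rw [hNR]; ring
        rw [expand]
        rw [hDe] at hF1 hkey
        have hF1' : 2^(e:ℕ)*s - 12*2^(e:ℕ) ≤ 2*((m:ℝ)*s) := by nlinarith [hF1]
        have hkey' : (2*(D:ℝ)+2)*s ≤ 64*2^(e:ℕ) := by nlinarith [hkey]
        nlinarith [hF1', hkey', hpowe]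
      have h1 : 1 - 1000/s = (s-1000)/s := by field_simp
      rw [h1, div_mul_eq_mul_div, div_le_iff₀ hspos]
      linarith [hcomp]
    rw [show D - 1 = e from by omega]
    calc (2:ℝ) ^ ((1 - 1000/s) * 2^(e:ℕ))
        ≤ (2:ℝ) ^ ((N:ℕ):ℝ) := Real.rpow_le_rpow_of_exponent_le one_le_two hexp
      _ = ((2^N : ℕ) : ℝ) := by rw [Real.rpow_natCast]; push_cast; ring
      _ ≤ (bis D : ℝ) := by exact_mod_cast hfin
end

section
/- In the d-dimensional Hamming cube, for every nonempty subset A of the even vertices with |A| ≤ 2^d/4, one has (|N(A)| - |A|)/|N(A)| = Ω(1/√d); i.e., there exists an absolute constant c > 0 such that |N(A)| - |A| ≥ (c/√d)·|N(A)|. -/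
-- ===== auxiliary development =====
noncomputable def gsh (z : ℝ) : ℝ := z * (1 - z)

set_option maxHeartbeats 1000000 in
lemma keypoly (t x y : ℝ) (ht : 0 < t) (ht' : t ≤ 1/4) (hx1 : x ≤ 1)
    (hy0 : 0 ≤ y) (hyx : y ≤ x) :
    2*t*(1 - 4*t^2) * gsh ((x+y)/2) ≤ t * gsh x + max (t * gsh y) (x - y) := by
  unfold gsh
  have hs0 : 0 ≤ x - y := by linarith
  have hs1 : x - y ≤ 1 := by linarith
  have hgy0 : 0 ≤ y * (1-y) := mul_nonneg hy0 (by linarith)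
  have hgy14 : y * (1-y) ≤ 1/4 := by nlinarith [sq_nonneg (y - 1/2)]
  have hM0 : 0 ≤ ((x+y)/2) * (1-(x+y)/2) := mul_nonneg (by linarith) (by linarith)
  have hMgy : y * (1-y) - (x-y)/2 ≤ ((x+y)/2) * (1-(x+y)/2) := by
    nlinarith [mul_nonneg hs0 (by linarith : (0:ℝ) ≤ 2 - (x+y)/2 - y)]
  have hid : t*(x*(1-x)) + t*(y*(1-y))
      = 2*(t*(((x+y)/2) * (1-(x+y)/2))) - t*(x-y)^2/2 := by ring
  rcases le_total (x - y) (t * (y * (1-y))) with h | h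
  · rw [max_eq_left (by linarith)]
    have q1 : (x-y)*(x-y) ≤ (t*(y*(1-y)))*(t*(y*(1-y))) := mul_self_le_mul_self hs0 h
    have q3 : x - y ≤ (y*(1-y))/4 := by nlinarith
    have key : (x-y)^2 ≤ 16 * t^2 * (((x+y)/2) * (1-(x+y)/2)) := by
      nlinarith [mul_le_mul_of_nonneg_left hMgy (sq_nonneg t),
        mul_le_mul_of_nonneg_left q3 (sq_nonneg t),
        mul_le_mul_of_nonneg_left hgy14 (mul_nonneg (sq_nonneg t) hgy0), sq_nonneg t]
    have key' : t*(x-y)^2 ≤ 16 * t^3 * (((x+y)/2) * (1-(x+y)/2)) := by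
      nlinarith [mul_le_mul_of_nonneg_left key ht.le]
    nlinarith [key', hid]
  · rw [max_eq_right (by linarith)]
    have ht3 : t^3 ≤ 1/64 := by
      calc t^3 ≤ (1/4)^3 := pow_le_pow_left₀ ht.le ht' 3
      _ = 1/64 := by norm_num
    have ht30 : (0:ℝ) ≤ t^3 := by positivity
    have htgy : t * (y*(1-y)) ≤ 1/16 := by
      calc t * (y*(1-y)) ≤ (1/4)*(1/4) := mul_le_mul ht' hgy14 hgy0 (by norm_num)
      _ = 1/16 := by norm_num
    have htgy0 : 0 ≤ t * (y*(1-y)) := mul_nonneg ht.le hgy0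
    have b1 : (x-y) + t*(y*(1-y)) ≤ 17/16 := by linarith
    have b2 : (t/2)*((x-y)+t*(y*(1-y))) ≤ (1/8)*(17/16) :=
      mul_le_mul (by linarith) b1 (by linarith) (by norm_num)
    have A1 : 0 ≤ ((x-y) - t*(y*(1-y))) * (1 - (t/2)*((x-y) + t*(y*(1-y))) - 4*t^3) := by
      apply mul_nonneg (by linarith)
      linarith
    have A2 : 8*t^3*(y*(1-y)) - 4*t^3*(x-y)
        ≤ 8*t^3*(((x+y)/2) * (1-(x+y)/2)) := by
      nlinarith [mul_le_mul_of_nonneg_left hMgy (by positivity : (0:ℝ) ≤ 8*t^3)]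
    have A3 : 0 ≤ 8*t^3*(y*(1-y)) - 4*t^4*(y*(1-y)) - (t^3/2)*(y*(1-y))^2 := by
      have : 0 ≤ t^3*(y*(1-y))*(8 - 4*t - (y*(1-y))/2) :=
        mul_nonneg (mul_nonneg ht30 hgy0) (by linarith)
      nlinarith [this]
    nlinarith [A1, A2, A3]

/-- symmetric version -/
lemma keypoly' (t x y : ℝ) (ht : 0 < t) (ht' : t ≤ 1/4)
    (hx0 : 0 ≤ x) (hx1 : x ≤ 1) (hy0 : 0 ≤ y) (hy1 : y ≤ 1) :
    2*t*(1 - 4*t^2) * gsh ((x+y)/2) ≤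
      max (t * gsh x) (y - x) + max (t * gsh y) (x - y) := by
  rcases le_total y x with hyx | hxy
  · have h1 := keypoly t x y ht ht' hx1 hy0 hyx
    have : t * gsh x ≤ max (t * gsh x) (y - x) := le_max_left _ _
    linarith
  · have h1 := keypoly t y x ht ht' hy1 hx0 hxy
    have : t * gsh y ≤ max (t * gsh y) (x - y) := le_max_left _ _
    have h2 : (x+y)/2 = (y+x)/2 := by ring
    rw [h2]
    linarith

/-- coefficient step: (1/4)/√(n+1) ≤ t(1−4t²) where t = (1/4)/√n, n ≥ 1 -/
lemma coefstep (n : ℕ) (hn : 1 ≤ n) :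
    (1/4 : ℝ) / Real.sqrt (n+1) ≤ ((1/4) / Real.sqrt n) * (1 - 4 * ((1/4)/Real.sqrt n)^2) := by
  have hn1 : (1:ℝ) ≤ (n:ℝ) := by exact_mod_cast hn
  have hsn : 0 < Real.sqrt n := Real.sqrt_pos.2 (by linarith)
  have hsn1 : 0 < Real.sqrt (n+1) := Real.sqrt_pos.2 (by linarith)
  have hsq : (Real.sqrt n)^2 = (n:ℝ) := Real.sq_sqrt (by linarith)
  have hsq1 : (Real.sqrt (n+1))^2 = (n:ℝ)+1 := Real.sq_sqrt (by linarith)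
  -- t(1-4t^2) = (1/4)/√n * (1 - (1/4)/n)
  have ht2 : ((1/4 : ℝ)/Real.sqrt n)^2 = (1/16)/n := by
    rw [div_pow, hsq]; norm_num
  rw [ht2]
  have key : Real.sqrt n ≤ Real.sqrt (n+1) * (1 - 1/(4*n)) := by
    have h1 : (0:ℝ) ≤ 1 - 1/(4*n) := by
      have : 1/(4*(n:ℝ)) ≤ 1/4 := by
        apply div_le_div_of_nonneg_left <;> linarith
      linarith
    have h2 : (n:ℝ) ≤ ((n:ℝ)+1) * (1 - 1/(4*n))^2 := by
      have e : (1:ℝ) - 1/(4*n) = (4*n-1)/(4*n) := by field_simp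
      rw [e, div_pow, ← mul_div_assoc, le_div_iff₀ (by positivity)]
      nlinarith [hn1]
    calc Real.sqrt n ≤ Real.sqrt (((n:ℝ)+1) * (1 - 1/(4*n))^2) := Real.sqrt_le_sqrt h2
    _ = Real.sqrt ((n:ℝ)+1) * (1 - 1/(4*n)) := by
        rw [Real.sqrt_mul (by linarith), Real.sqrt_sq h1]
  have hrw : ((1/4:ℝ)/Real.sqrt n) * (1 - 4*((1/16)/n)) = (1/4) * (1 - 1/(4*n)) / Real.sqrt n := by
    field_simp; ring
  rw [hrw]
  rw [div_le_div_iff₀ hsn1 hsn]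
  have h1 : (0:ℝ) ≤ 1 - 1/(4*n) := by
    have : 1/(4*(n:ℝ)) ≤ 1/4 := by
      apply div_le_div_of_nonneg_left <;> linarith
    linarith
  calc (1/4:ℝ) * Real.sqrt n ≤ (1/4) * (Real.sqrt (n+1) * (1 - 1/(4*n))) := by
        apply mul_le_mul_of_nonneg_left key; norm_num
  _ = 1/4 * (1 - 1/(4*n)) * Real.sqrt (n+1) := by ring

abbrev V (n : ℕ) := Fin n → Bool

def gam {n : ℕ} (A : Finset (V n)) : Finset (V n) :=
  Finset.univ.filter (fun v => ∃ a ∈ A, hammingDist a v ≤ 1)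

lemma mem_gam {n : ℕ} {A : Finset (V n)} {v : V n} :
    v ∈ gam A ↔ ∃ a ∈ A, hammingDist a v ≤ 1 := by
  simp [gam]

lemma subset_gam {n : ℕ} (A : Finset (V n)) : A ⊆ gam A := by
  intro a ha
  exact mem_gam.2 ⟨a, ha, by simp⟩

def cns {n : ℕ} (b : Bool) (u : V n) : V (n+1) := Fin.cons b u
def tl {n : ℕ} (v : V (n+1)) : V n := Fin.tail v

@[simp] lemma cns_zero {n : ℕ} (b : Bool) (u : V n) : cns b u 0 = b := rfl
@[simp] lemma tl_cns {n : ℕ} (b : Bool) (u : V n) : tl (cns b u) = u := rfl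
@[simp] lemma cns_tl {n : ℕ} (v : V (n+1)) : cns (v 0) (tl v) = v :=
  Fin.cons_self_tail v

lemma hamming_cons {n : ℕ} (b c : Bool) (x y : V n) :
    hammingDist (cns b x) (cns c y) = (if b = c then 0 else 1) + hammingDist x y := by
  unfold hammingDist cns
  rw [Finset.card_filter, Finset.card_filter, Fin.sum_univ_succ]
  simp only [Fin.cons_zero, Fin.cons_succ]
  by_cases h : b = c <;> simp [h]

def sec {n : ℕ} (b : Bool) (A : Finset (V (n+1))) : Finset (V n) :=
  (A.filter (fun v => v 0 = b)).image tl

lemma mem_sec {n : ℕ} {b : Bool} {A : Finset (V (n+1))} {u : V n} :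
    u ∈ sec b A ↔ cns b u ∈ A := by
  constructor
  · rintro h
    obtain ⟨v, hv, rfl⟩ := Finset.mem_image.1 h
    obtain ⟨hvA, hv0⟩ := Finset.mem_filter.1 hv
    rwa [← hv0, cns_tl]
  · intro h
    exact Finset.mem_image.2 ⟨cns b u, Finset.mem_filter.2 ⟨h, by simp⟩, by simp⟩

lemma card_sec_add {n : ℕ} (A : Finset (V (n+1))) :
    (sec false A).card + (sec true A).card = A.card := by
  have inj : ∀ b : Bool, Set.InjOn tl ((A.filter (fun v => v 0 = b) : Finset (V (n+1))) : Set (V (n+1))) := by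
    intro b v hv w hw h
    simp only [Finset.coe_filter, Set.mem_setOf_eq] at hv hw
    rw [← cns_tl v, ← cns_tl w, hv.2, hw.2, h]
  have c : ∀ b : Bool, (sec b A).card = (A.filter (fun v => v 0 = b)).card := fun b =>
    Finset.card_image_of_injOn (inj b)
  rw [c, c]
  have : (A.filter (fun v => v 0 = true)) = (A.filter (fun v => ¬ (v 0 = false))) := by
    apply Finset.filter_congr
    intro v _
    simp
  rw [this]
  have := Finset.card_filter_add_card_filter_not (s := A) (p := fun v => v 0 = false)
  convert this using 3

lemma gam_sec {n : ℕ} (b : Bool) (A : Finset (V (n+1))) :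
    sec b (gam A) = gam (sec b A) ∪ sec (!b) A := by
  ext u
  rw [Finset.mem_union, mem_sec, mem_gam, mem_gam]
  constructor
  · rintro ⟨a, haA, hd⟩
    rw [show a = cns (a 0) (tl a) from (cns_tl a).symm, hamming_cons] at hd
    by_cases h0 : a 0 = b
    · left
      refine ⟨tl a, mem_sec.2 ?_, ?_⟩
      · rwa [← h0, cns_tl]
      · rw [h0, if_pos rfl, zero_add] at hd; exact hd
    · right
      have h0' : a 0 = !b := by cases b <;> cases hb : a 0 <;> simp_all
      rw [if_neg h0] at hd
      have hz : hammingDist (tl a) u = 0 := by omega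
      have : tl a = u := hammingDist_eq_zero.1 hz
      rw [mem_sec, ← this, ← h0', cns_tl]
      exact haA
  · rintro (⟨a', ha', hd⟩ | h)
    · exact ⟨cns b a', mem_sec.1 ha', by rwa [hamming_cons, if_pos rfl, zero_add]⟩
    · refine ⟨cns (!b) u, mem_sec.1 h, ?_⟩
      rw [hamming_cons]
      simp

lemma card_gam_ge {n : ℕ} (A : Finset (V (n+1))) (b : Bool) :
    max (gam (sec b A)).card (sec (!b) A).card ≤ (sec b (gam A)).card := by
  rw [gam_sec]
  exact max_le (Finset.card_le_card Finset.subset_union_left)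
    (Finset.card_le_card Finset.subset_union_right)

lemma card_V (n : ℕ) : Fintype.card (V n) = 2^n := by
  simp [Fintype.card_fun]

lemma card_le_pow {n : ℕ} (A : Finset (V n)) : A.card ≤ 2^n := by
  rw [← card_V n]
  exact Finset.card_le_univ A

def wt {n : ℕ} (v : V n) : ℕ := (Finset.univ.filter (fun i => v i = true)).card

lemma par_dist {n : ℕ} (x y : V n) :
    hammingDist x y + 2 * (Finset.univ.filter (fun i => x i = true ∧ y i = true)).card
      = wt x + wt y := by
  unfold hammingDist wt
  rw [Finset.card_filter, Finset.card_filter, Finset.card_filter, Finset.card_filter,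
    Finset.mul_sum, ← Finset.sum_add_distrib, ← Finset.sum_add_distrib]
  apply Finset.sum_congr rfl
  intro i _
  cases hx : x i <;> cases hy : y i <;> simp [hx, hy]

lemma par_neighbor {n : ℕ} {x y : V n} (h : hammingDist x y = 1) :
    Even (wt x) ↔ ¬ Even (wt y) := by
  have := par_dist x y
  rw [h] at this
  rw [Nat.even_iff, Nat.even_iff]
  omega

lemma wt_cns {n : ℕ} (b : Bool) (u : V n) :
    wt (cns b u) = (if b = true then 1 else 0) + wt u := by
  unfold wt cns
  rw [Finset.card_filter, Finset.card_filter, Fin.sum_univ_succ]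
  simp [Fin.cons_zero, Fin.cons_succ]

lemma gsh_nonneg {z : ℝ} (h0 : 0 ≤ z) (h1 : z ≤ 1) : 0 ≤ gsh z :=
  mul_nonneg h0 (by linarith)

theorem core (n : ℕ) (A : Finset (V n)) :
    (1/4 : ℝ)/Real.sqrt n * (2^n * gsh ((A.card : ℝ)/2^n)) ≤ ((gam A).card : ℝ) - A.card := by
  induction n with
  | zero =>
    have hg := Finset.card_le_card (subset_gam A)
    have hgR : (A.card : ℝ) ≤ (gam A).card := by exact_mod_cast hg
    simp only [Nat.cast_zero, Real.sqrt_zero, div_zero, zero_mul]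
    linarith
  | succ k ih =>
    have hg := Finset.card_le_card (subset_gam A)
    have hgR : (A.card : ℝ) ≤ (gam A).card := by exact_mod_cast hg
    have hc1 : ((k+1:ℕ):ℝ) = (k:ℝ)+1 := by push_cast; ring
    rcases Nat.eq_zero_or_pos k with hk | hk
    · -- base case Q_1
      subst hk
      have hcard : A.card ≤ 2 := by simpa using card_le_pow A
      have hsqrt1 : Real.sqrt ((0+1:ℕ):ℝ) = 1 := by norm_num
      interval_cases h : A.card
      · norm_num [gsh]
      · have huniv : gam A = Finset.univ := by
          obtain ⟨a, ha⟩ := Finset.card_pos.1 (by rw [h]; norm_num)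
          apply Finset.eq_univ_of_forall
          intro v
          refine mem_gam.2 ⟨a, ha, le_trans hammingDist_le_card_fintype ?_⟩
          simp
        have h2 : ((gam A).card : ℝ) = 2 := by
          rw [huniv, Finset.card_univ, card_V]; norm_num
        rw [h2, hsqrt1]
        norm_num [gsh]
      · norm_num [gsh]
        push_cast at hgR
        linarith
    · -- induction step
      set t : ℝ := (1/4)/Real.sqrt k with htdef
      have hsk : (1:ℝ) ≤ Real.sqrt k := by
        rw [show (1:ℝ) = Real.sqrt 1 by simp]
        exact Real.sqrt_le_sqrt (by exact_mod_cast hk)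
      have ht : 0 < t := by positivity
      have ht' : t ≤ 1/4 := by
        rw [htdef, div_le_iff₀ (by linarith)]
        nlinarith
      set m0 : ℕ := (sec false A).card with hm0
      set m1 : ℕ := (sec true A).card with hm1
      set x : ℝ := (m0 : ℝ)/2^k with hxd
      set y : ℝ := (m1 : ℝ)/2^k with hyd
      have h2k : (0:ℝ) < 2^k := by positivity
      have hx0 : 0 ≤ x := by positivity
      have hy0 : 0 ≤ y := by positivity
      have hx1 : x ≤ 1 := by
        rw [hxd, div_le_one h2k]
        exact_mod_cast card_le_pow (sec false A)
      have hy1 : y ≤ 1 := by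
        rw [hyd, div_le_one h2k]
        exact_mod_cast card_le_pow (sec true A)
      have ih0 := ih (sec false A)
      have ih1 := ih (sec true A)
      have gsplit : ((gam A).card : ℝ) = ((sec false (gam A)).card : ℝ) + (sec true (gam A)).card := by
        exact_mod_cast (card_sec_add (gam A)).symm
      have asplit : (A.card : ℝ) = (m0 : ℝ) + m1 := by
        exact_mod_cast (card_sec_add A).symm
      have b0 : max ((gam (sec false A)).card : ℝ) (m1 : ℝ) ≤ (sec false (gam A)).card := by
        have h' := (Nat.cast_le (α := ℝ)).2 (card_gam_ge A false)
        rw [Nat.cast_max] at h'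
        simpa using h'
      have b1 : max ((gam (sec true A)).card : ℝ) (m0 : ℝ) ≤ (sec true (gam A)).card := by
        have h' := (Nat.cast_le (α := ℝ)).2 (card_gam_ge A true)
        rw [Nat.cast_max] at h'
        simpa using h'
      have key := keypoly' t x y ht ht' hx0 hx1 hy0 hy1
      have e0 : (2:ℝ)^k * max (t * gsh x) (y - x) = max (t * (2^k * gsh x)) ((m1:ℝ) - m0) := by
        rw [mul_max_of_nonneg _ _ h2k.le]
        congr 1
        · ring
        · rw [hxd, hyd]; field_simp
      have e1 : (2:ℝ)^k * max (t * gsh y) (x - y) = max (t * (2^k * gsh y)) ((m0:ℝ) - m1) := by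
        rw [mul_max_of_nonneg _ _ h2k.le]
        congr 1
        · ring
        · rw [hxd, hyd]; field_simp
      have i0 : max (t * (2^k * gsh x)) ((m1:ℝ) - m0) ≤ ((sec false (gam A)).card : ℝ) - m0 := by
        have u1 : ((gam (sec false A)).card : ℝ) ≤ (sec false (gam A)).card :=
          le_trans (le_max_left _ (m1:ℝ)) b0
        have u2 : (m1 : ℝ) ≤ (sec false (gam A)).card :=
          le_trans (le_max_right ((gam (sec false A)).card : ℝ) _) b0
        apply max_le
        · have : t * (2^k * gsh x) ≤ ((gam (sec false A)).card : ℝ) - m0 := by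
            rw [htdef, hxd]; exact ih0
          linarith
        · linarith
      have i1 : max (t * (2^k * gsh y)) ((m0:ℝ) - m1) ≤ ((sec true (gam A)).card : ℝ) - m1 := by
        have u1 : ((gam (sec true A)).card : ℝ) ≤ (sec true (gam A)).card :=
          le_trans (le_max_left _ (m0:ℝ)) b1
        have u2 : (m0 : ℝ) ≤ (sec true (gam A)).card :=
          le_trans (le_max_right ((gam (sec true A)).card : ℝ) _) b1
        apply max_le
        · have : t * (2^k * gsh y) ≤ ((gam (sec true A)).card : ℝ) - m1 := by
            rw [htdef, hyd]; exact ih1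
          linarith
        · linarith
      have step1 : 2^k * (max (t * gsh x) (y - x) + max (t * gsh y) (x - y))
          ≤ ((gam A).card : ℝ) - A.card := by
        rw [gsplit, asplit, mul_add, e0, e1]
        linarith
      have hmid : (x + y)/2 = (A.card : ℝ)/2^(k+1) := by
        rw [hxd, hyd, asplit, ← add_div, div_div]
        norm_num [pow_succ]
      have hgsh0 : 0 ≤ gsh ((x+y)/2) := gsh_nonneg (by linarith) (by linarith)
      have hcoef := coefstep k hk
      have step2 : (1/4)/Real.sqrt ((k:ℝ)+1) * (2^(k+1) * gsh ((A.card:ℝ)/2^(k+1)))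
          ≤ 2^k * (2*t*(1 - 4*t^2) * gsh ((x+y)/2)) := by
        rw [← hmid]
        calc (1/4)/Real.sqrt ((k:ℝ)+1) * (2^(k+1) * gsh ((x+y)/2))
            ≤ (t * (1 - 4*t^2)) * (2^(k+1) * gsh ((x+y)/2)) := by
              apply mul_le_mul_of_nonneg_right _ (by positivity)
              rw [htdef]; exact hcoef
          _ = 2^k * (2*t*(1 - 4*t^2) * gsh ((x+y)/2)) := by ring
      have step3 : 2^k * (2*t*(1 - 4*t^2) * gsh ((x+y)/2))
          ≤ 2^k * (max (t * gsh x) (y - x) + max (t * gsh y) (x - y)) :=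
        mul_le_mul_of_nonneg_left key (by positivity)
      rw [show Real.sqrt ((k+1:ℕ):ℝ) = Real.sqrt ((k:ℝ)+1) by rw [hc1]]
      linarith

lemma tl_injOn {n : ℕ} {S : Finset (V (n+1))}
    (h : ∀ v ∈ S, ∀ w ∈ S, (Even (wt v) ↔ Even (wt w))) :
    Set.InjOn tl ((S : Finset (V (n+1))) : Set (V (n+1))) := by
  intro v hv w hw htl
  simp only [Finset.mem_coe] at hv hw
  have hpar := h v hv w hw
  have hv' : wt v = (if v 0 = true then 1 else 0) + wt (tl v) := by
    conv_lhs => rw [← cns_tl v]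
    exact wt_cns _ _
  have hw' : wt w = (if w 0 = true then 1 else 0) + wt (tl w) := by
    conv_lhs => rw [← cns_tl w]
    exact wt_cns _ _
  rw [htl] at hv'
  have h0 : v 0 = w 0 := by
    rw [Nat.even_iff, Nat.even_iff] at hpar
    cases hv0 : v 0 <;> cases hw0 : w 0 <;> simp [hv0, hw0] at hv' hw' ⊢ <;> omega
  rw [← cns_tl v, ← cns_tl w, htl, h0]


/-- Isoperimetry: there is an absolute constant `c > 0` such that every nonempty
`A ⊆ 𝓔` with `|A| ≤ 2^d/4` satisfies `|N(A)| - |A| ≥ (c/√d)·|N(A)|`. -/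
theorem isoperimetry_quarter :
    ∃ c : ℝ, 0 < c ∧ ∀ d : ℕ, 1 ≤ d →
      ∀ A : Set (Fin d → Bool), A.Nonempty → (∀ v ∈ A, isEvenVtx v) →
        (A.ncard : ℝ) ≤ 2 ^ d / 4 →
        (c / Real.sqrt d) * (nbhd A).ncard
          ≤ ((nbhd A).ncard : ℝ) - A.ncard := by
  classical
  refine ⟨1/16, by norm_num, ?_⟩
  intro d hd A hne hev hcard
  obtain ⟨n, rfl⟩ : ∃ n, d = n + 1 := ⟨d - 1, by omega⟩
  have hfin : A.Finite := Set.toFinite A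
  have hpos : 0 < A.ncard := hne.ncard_pos hfin
  rcases Nat.eq_zero_or_pos n with hn | hn
  · -- d = 1 : contradiction
    subst hn
    exfalso
    have : (1:ℝ) ≤ A.ncard := by exact_mod_cast hpos
    norm_num at hcard
    linarith
  -- main case
  set AF := hfin.toFinset with hAFdef
  have hmemAF : ∀ a, a ∈ AF ↔ a ∈ A := fun a => hfin.mem_toFinset
  have hAFcard : A.ncard = AF.card := Set.ncard_eq_toFinset_card A hfin
  have hevF : ∀ a ∈ AF, Even (wt a) := fun a ha => hev a ((hmemAF a).1 ha)
  set NF := Finset.univ.filter (fun w : V (n+1) => ∃ a ∈ AF, hammingDist a w = 1) with hNFdef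
  have hNFmem : ∀ w, w ∈ NF ↔ ∃ a ∈ AF, hammingDist a w = 1 := by
    intro w; simp [hNFdef]
  have hnb : nbhd A = ↑NF := by
    ext w
    simp only [nbhd, Set.mem_setOf_eq, Finset.coe_filter, hNFdef, Finset.mem_coe,
      Finset.mem_filter, Finset.mem_univ, true_and]
    constructor
    · rintro ⟨a, ha, hadj⟩
      exact ⟨a, (hmemAF a).2 ha, hadj⟩
    · rintro ⟨a, ha, hadj⟩
      exact ⟨a, (hmemAF a).1 ha, hadj⟩
  have hnbcard : (nbhd A).ncard = NF.card := by rw [hnb, Set.ncard_coe_finset]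
  have hNFodd : ∀ w ∈ NF, ¬ Even (wt w) := by
    intro w hw
    obtain ⟨a, ha, hd1⟩ := (hNFmem w).1 hw
    exact (par_neighbor hd1).1 (hevF a ha)
  set A' := AF.image tl with hA'def
  have hA'card : A'.card = AF.card := by
    apply Finset.card_image_of_injOn
    apply tl_injOn
    intro v hv w hw
    simp [hevF v hv, hevF w hw]
  have hNF'card : (NF.image tl).card = NF.card := by
    apply Finset.card_image_of_injOn
    apply tl_injOn
    intro v hv w hw
    simp [hNFodd v hv, hNFodd w hw]
  have hNFim : NF.image tl = gam A' := by
    ext u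
    rw [Finset.mem_image, mem_gam]
    constructor
    · rintro ⟨w, hw, rfl⟩
      obtain ⟨a, ha, hd1⟩ := (hNFmem w).1 hw
      refine ⟨tl a, Finset.mem_image_of_mem tl ha, ?_⟩
      rw [← cns_tl a, ← cns_tl w, hamming_cons] at hd1
      split_ifs at hd1 <;> omega
    · rintro ⟨a', ha', hd1⟩
      obtain ⟨a, ha, rfl⟩ := Finset.mem_image.1 ha'
      interval_cases hca : hammingDist (tl a) u
      · -- distance 0 : u = tl a
        have hu : tl a = u := hammingDist_eq_zero.1 hca
        refine ⟨cns (! (a 0)) u, ?_, by simp⟩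
        rw [hNFmem]
        refine ⟨a, ha, ?_⟩
        rw [← cns_tl a, hamming_cons, hu, hammingDist_self]
        cases a 0 <;> simp
      · -- distance 1
        refine ⟨cns (a 0) u, ?_, by simp⟩
        rw [hNFmem]
        refine ⟨a, ha, ?_⟩
        rw [← cns_tl a, hamming_cons]
        simp [hca]
  -- numerics
  have hkey := core n A'
  set G : ℝ := ((gam A').card : ℝ) with hGdef
  set m : ℝ := (A'.card : ℝ) with hmdef
  have hGm : m ≤ G := by
    rw [hGdef, hmdef]
    exact_mod_cast Finset.card_le_card (subset_gam A')
  have hG2 : G ≤ 2^n := by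
    rw [hGdef]; exact_mod_cast card_le_pow (gam A')
  have hm0 : 0 ≤ m := by positivity
  have h2n : (0:ℝ) < 2^n := by positivity
  have hmA : (A.ncard : ℝ) = m := by rw [hAFcard, hmdef, hA'card]
  have hNG : ((nbhd A).ncard : ℝ) = G := by
    rw [hnbcard, hGdef, ← hNFim, hNF'card]
  have hmhalf : m ≤ 2^n/2 := by
    have : (2:ℝ)^(n+1)/4 = 2^n/2 := by ring
    rw [← hmA]; linarith [hcard, this.symm ▸ hcard]
  have hgsh : m/2 ≤ 2^n * gsh (m/2^n) := by
    unfold gsh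
    have h1 : m/2^n ≤ 1/2 := by
      rw [div_le_iff₀ h2n]; linarith
    have : 2^n * (m/2^n * (1 - m/2^n)) = m * (1 - m/2^n) := by
      field_simp
    rw [this]
    nlinarith
  have hsn : (1:ℝ) ≤ Real.sqrt n := by
    rw [show (1:ℝ) = Real.sqrt 1 by simp]
    exact Real.sqrt_le_sqrt (by exact_mod_cast hn)
  have hsn1 : Real.sqrt n ≤ Real.sqrt (n+1) := Real.sqrt_le_sqrt (by linarith)
  have hsd : Real.sqrt ((n+1:ℕ):ℝ) = Real.sqrt ((n:ℝ)+1) := by push_cast; ring_nf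
  rw [hmA, hNG, hsd]
  have hsp : (0:ℝ) < Real.sqrt ((n:ℝ)+1) := by positivity
  rcases le_total G (2*m) with hcase | hcase
  · -- G ≤ 2m
    have c1 : (1/16)/Real.sqrt ((n:ℝ)+1) * G ≤ (1/16)/Real.sqrt n * G := by
      apply mul_le_mul_of_nonneg_right _ (by positivity)
      apply div_le_div_of_nonneg_left (by norm_num) (by linarith) hsn1
    have c2 : (1/16)/Real.sqrt n * G ≤ (1/4)/Real.sqrt n * (m/2) := by
      have : (1/16)/Real.sqrt n * G ≤ (1/16)/Real.sqrt n * (2*m) := by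
        apply mul_le_mul_of_nonneg_left hcase (by positivity)
      calc (1/16)/Real.sqrt n * G ≤ (1/16)/Real.sqrt n * (2*m) := this
        _ = (1/4)/Real.sqrt n * (m/2) := by ring
    have c3 : (1/4)/Real.sqrt n * (m/2) ≤ (1/4)/Real.sqrt n * (2^n * gsh (m/2^n)) := by
      apply mul_le_mul_of_nonneg_left hgsh (by positivity)
    linarith
  · -- 2m ≤ G
    have c1 : (1/16)/Real.sqrt ((n:ℝ)+1) * G ≤ (1/2) * G := by
      apply mul_le_mul_of_nonneg_right _ (by linarith [hm0, hGm])
      calc (1/16)/Real.sqrt ((n:ℝ)+1) ≤ (1/16)/1 := by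
            apply div_le_div_of_nonneg_left (by norm_num) (by norm_num) (by linarith)
        _ ≤ 1/2 := by norm_num
    linarith
end

section
/- Let I be an independent set in Q_d with I = A ∪ B where A = I ∩ 𝓔 and B = I ∩ 𝓞. Then there are no edges between [A] and [B], that is, N([A]) ∩ [B] = ∅; hence min(|[A]|, |[B]|) ≤ 2^d/4. -/
namespace bisAux

variable {d : ℕ}

lemma adj_parity {u w : Fin d → Bool} (h : (cube d).Adj u w) :
    isEvenVtx u ↔ ¬ isEvenVtx w := by
  have h1 : (Finset.univ.filter fun i => u i ≠ w i).card = 1 := h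
  obtain ⟨j, hj⟩ := Finset.card_eq_one.mp h1
  have hji : ∀ i, u i ≠ w i ↔ i = j := by
    intro i
    rw [← Finset.mem_singleton, ← hj]
    simp
  have hoff : ∀ i, i ≠ j → u i = w i := by
    intro i hi
    by_contra hne
    exact hi ((hji i).mp hne)
  have hjne : u j ≠ w j := (hji j).mpr rfl
  set Su := Finset.univ.filter (fun i => u i = true) with hSu
  set Sw := Finset.univ.filter (fun i => w i = true) with hSw
  have herase : Su.erase j = Sw.erase j := by
    ext i
    simp only [hSu, hSw, Finset.mem_erase, Finset.mem_filter, Finset.mem_univ, true_and]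
    constructor
    · rintro ⟨hij, hu⟩; exact ⟨hij, (hoff i hij) ▸ hu⟩
    · rintro ⟨hij, hw⟩; exact ⟨hij, (hoff i hij).symm ▸ hw⟩
  show Even Su.card ↔ ¬ Even Sw.card
  cases huj : u j with
  | false =>
    have hwj : w j = true := by
      cases hw : w j
      · exact absurd (huj.trans hw.symm) hjne
      · rfl
    have hjSu : j ∉ Su := by simp [hSu, huj]
    have hjSw : j ∈ Sw := by simp [hSw, hwj]
    have hSweq : Sw = insert j Su := by
      rw [← Finset.insert_erase hjSw, ← herase, Finset.erase_eq_of_notMem hjSu]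
    rw [hSweq, Finset.card_insert_of_notMem hjSu, Nat.even_add_one]
    tauto
  | true =>
    have hwj : w j = false := by
      cases hw : w j
      · rfl
      · exact absurd (huj.trans hw.symm) hjne
    have hjSu : j ∈ Su := by simp [hSu, huj]
    have hjSw : j ∉ Sw := by simp [hSw, hwj]
    have hSueq : Su = insert j Sw := by
      rw [← Finset.insert_erase hjSu, herase, Finset.erase_eq_of_notMem hjSw]
    rw [hSueq, Finset.card_insert_of_notMem hjSw, Nat.even_add_one]

lemma flip_adj (j : Fin d) (v : Fin d → Bool) :
    (cube d).Adj v (Function.update v j (!v j)) := by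
  show hammingDist v (Function.update v j (!v j)) = 1
  have : (Finset.univ.filter fun i => v i ≠ Function.update v j (!v j) i) = {j} := by
    ext i
    by_cases h : i = j <;> simp [Function.update, h]
  rw [hammingDist, this, Finset.card_singleton]

lemma flip_invol (j : Fin d) :
    Function.Involutive (fun v : Fin d → Bool => Function.update v j (!v j)) := by
  intro v
  simp [Function.update_idem]

end bisAux

/-- If `I` is independent in `Q_d` with even part `A` and odd part `B`, then
`N([A]) ∩ [B] = ∅` and `min(|[A]|, |[B]|) ≤ 2^d/4`. -/

theorem closures_no_edges (d : ℕ) (hd : 1 ≤ d) (I : Set (Fin d → Bool))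
    (hI : IsIndepSet (cube d) I)
    (A B : Set (Fin d → Bool))
    (hA : A = I ∩ {v | isEvenVtx v}) (hB : B = I ∩ {v | ¬ isEvenVtx v}) :
    nbhd (closure' A) ∩ closure' B = ∅ ∧
    (min (closure' A).ncard (closure' B).ncard : ℝ) ≤ 2 ^ d / 4 := by
  classical
  have part1 : nbhd (closure' A) ∩ closure' B = ∅ := by
    ext v
    simp only [Set.mem_inter_iff, Set.mem_empty_iff_false, iff_false, not_and]
    rintro ⟨u, hu, huv⟩ hvB
    have hvNA : v ∈ nbhd A := hu huv
    obtain ⟨a, haA, hav⟩ := hvNA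
    have haNB : a ∈ nbhd B := hvB ((cube d).adj_symm hav)
    obtain ⟨b, hbB, hba⟩ := haNB
    have haI : a ∈ I := (hA ▸ haA).1
    have hbI : b ∈ I := (hB ▸ hbB).1
    have hne : b ≠ a := (cube d).ne_of_adj hba
    exact hI hbI haI hne hba
  refine ⟨part1, ?_⟩
  set j : Fin d := ⟨0, hd⟩ with hjdef
  set flip : (Fin d → Bool) → (Fin d → Bool) := fun v => Function.update v j (!v j) with hflip
  have hinj : Function.Injective flip := (bisAux.flip_invol j).injective
  have hadj : ∀ v, (cube d).Adj v (flip v) := bisAux.flip_adj j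
  set E : Set (Fin d → Bool) := {v | isEvenVtx v} with hE
  set O : Set (Fin d → Bool) := {v | ¬ isEvenVtx v} with hO
  -- closure' A ⊆ E
  have hAE : closure' A ⊆ E := by
    intro v hv
    have h1 : flip v ∈ nbhd A := hv (hadj v)
    obtain ⟨a, haA, hav⟩ := h1
    have haE : isEvenVtx a := (hA ▸ haA).2
    have hfo : ¬ isEvenVtx (flip v) := (bisAux.adj_parity hav).mp haE
    exact (bisAux.adj_parity (hadj v)).mpr hfo
  -- closure' B ⊆ O
  have hBO : closure' B ⊆ O := by
    intro v hv
    have h1 : flip v ∈ nbhd B := hv (hadj v)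
    obtain ⟨b, hbB, hbv⟩ := h1
    have hbO : ¬ isEvenVtx b := (hB ▸ hbB).2
    have hfe : isEvenVtx (flip v) := by
      by_contra hc
      exact hbO ((bisAux.adj_parity hbv).mpr hc)
    intro hve
    exact (bisAux.adj_parity (hadj v)).mp hve hfe
  -- flip maps E into O and O into E
  have hflipEO : ∀ v, isEvenVtx v → ¬ isEvenVtx (flip v) :=
    fun v hv => (bisAux.adj_parity (hadj v)).mp hv
  have hflipOE : ∀ v, ¬ isEvenVtx v → isEvenVtx (flip v) := by
    intro v hv
    by_contra hc
    exact hv ((bisAux.adj_parity (hadj v)).mpr hc)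
  -- cardinality of E and O
  have hEOcard : E.ncard = O.ncard := by
    apply le_antisymm
    · calc E.ncard = (flip '' E).ncard := (Set.ncard_image_of_injective _ hinj).symm
        _ ≤ O.ncard := Set.ncard_le_ncard
            (by rintro _ ⟨v, hv, rfl⟩; exact hflipEO v hv) (Set.toFinite _)
    · calc O.ncard = (flip '' O).ncard := (Set.ncard_image_of_injective _ hinj).symm
        _ ≤ E.ncard := Set.ncard_le_ncard
            (by rintro _ ⟨v, hv, rfl⟩; exact hflipOE v hv) (Set.toFinite _)
  have hEOsum : E.ncard + O.ncard = 2 ^ d := by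
    have hdisj : Disjoint E O := by
      rw [Set.disjoint_iff_inter_eq_empty]
      ext v; simp [hE, hO]
    have hunion : E ∪ O = Set.univ := by
      ext v; simp [hE, hO]; tauto
    have := Set.ncard_union_eq hdisj (Set.toFinite _) (Set.toFinite _)
    rw [hunion] at this
    rw [← this, Set.ncard_univ, Nat.card_eq_fintype_card]
    simp
  -- F = flip image of closure' A, sits in O, disjoint from closure' B
  set F : Set (Fin d → Bool) := flip '' (closure' A) with hF
  have hFcard : F.ncard = (closure' A).ncard := Set.ncard_image_of_injective _ hinj
  have hFO : F ⊆ O := by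
    rintro _ ⟨v, hv, rfl⟩
    exact hflipEO v (hAE hv)
  have hFdisj : Disjoint F (closure' B) := by
    rw [Set.disjoint_iff_inter_eq_empty]
    apply Set.eq_empty_of_subset_empty
    rw [← part1]
    apply Set.inter_subset_inter_left
    rintro _ ⟨v, hv, rfl⟩
    exact ⟨v, hv, hadj v⟩
  have hsumle : (closure' A).ncard + (closure' B).ncard ≤ O.ncard := by
    rw [← hFcard, ← Set.ncard_union_eq hFdisj (Set.toFinite _) (Set.toFinite _)]
    exact Set.ncard_le_ncard (Set.union_subset hFO hBO) (Set.toFinite _)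
  -- finish
  have hkey : 4 * min (closure' A).ncard (closure' B).ncard ≤ 2 ^ d := by
    have h2 : 2 * O.ncard = 2 ^ d := by omega
    have hmin : 2 * min (closure' A).ncard (closure' B).ncard
        ≤ (closure' A).ncard + (closure' B).ncard := by
      rcases min_cases (closure' A).ncard (closure' B).ncard with ⟨h, _⟩ | ⟨h, _⟩ <;> omega
    omega
  have := (Nat.cast_le (α := ℝ)).mpr hkey
  push_cast at this
  linarith
end
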